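/- Let f = {f_t}_{t≥1} be a non-blocking anonymous age-based acknowledgment-based protocol for n players. If the expected latency of a player using f (when all players use f) is finite, then f is not in equilibrium. -/

import Mathlib

open scoped ENNReal

namespace Contention

/-- An acknowledgment-based protocol: maps a player's personal transmission history
(the list of her own past transmission indicators, oldest slot first) to the
probability of transmitting in the next slot. -/
abbrev Protocol : Type := List Bool → ℝ

/-- A protocol is valid if it always prescribes a probability in `[0,1]`. -/
def ValidProtocol (f : Protocol) : Prop := ∀ h : List Bool, 0 ≤ f h ∧ f h ≤ 1

/-- A joint transmission history: the list of transmission vectors, oldest slot first. -/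
abbrev Hist (n : ℕ) : Type := List (Fin n → Bool)

/-- The personal transmission history of player `i` extracted from a joint history. -/
def personal {n : ℕ} (h : Hist n) (i : Fin n) : List Bool := h.map fun v => v i

/-- Player `i` transmits alone (hence successfully) in the slot with transmission vector `v`. -/
def alone {n : ℕ} (v : Fin n → Bool) (i : Fin n) : Prop :=
  v i = true ∧ ∀ j : Fin n, j ≠ i → v j = false

instance {n : ℕ} (v : Fin n → Bool) (i : Fin n) : Decidable (alone v i) := by
  unfold alone; infer_instance

/-- Player `i` is still pending after joint history `h` (she never transmitted alone). -/
def pending {n : ℕ} (h : Hist n) (i : Fin n) : Prop := ∀ v ∈ h, ¬ alone v i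

instance {n : ℕ} (h : Hist n) (i : Fin n) : Decidable (pending h i) := by
  unfold pending; infer_instance

/-- Probability that the next slot has transmission vector `v`, given joint history `h`:
each pending player transmits independently with the probability her protocol assigns to
her personal history, and players that already succeeded stay quiet. -/
noncomputable def stepProb {n : ℕ} (F : Fin n → Protocol) (h : Hist n) (v : Fin n → Bool) : ℝ :=
  ∏ i : Fin n,
    if pending h i then
      (if v i = true then F i (personal h i) else 1 - F i (personal h i))
    else
      (if v i = true then 0 else 1)

/-- Probability that, starting after joint history `h`, the next `e.length` slots produce
exactly the extension `e`. -/
noncomputable def contProb {n : ℕ} (F : Fin n → Protocol) (h e : Hist n) : ℝ :=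
  ∏ t ∈ Finset.range e.length, stepProb F (h ++ e.take t) (e.getD t fun _ => false)

/-- Probability that the first `h.length` slots produce exactly the joint history `h`. -/
noncomputable def histProb {n : ℕ} (F : Fin n → Protocol) (h : Hist n) : ℝ := contProb F [] h

/-- Conditional probability, given joint history `h`, that player `i` is still pending
after `s` further slots. -/
noncomputable def condPendProb {n : ℕ} (F : Fin n → Protocol) (h : Hist n) (i : Fin n)
    (s : ℕ) : ℝ :=
  ∑ e : Fin s → Fin n → Bool,
    if pending (h ++ List.ofFn e) i then contProb F h (List.ofFn e) else 0

/-- Conditional expected latency `E[Tᵢ | h]` of player `i` given joint history `h`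
(`Tᵢ` is the first slot in which `i` transmits alone), computed via
`E[Tᵢ | h] = ∑_{s ≥ 0} Pr(Tᵢ > s | h)`; for `s ≤ h.length` the event `Tᵢ > s` is
determined by `h`, and for larger `s` its probability is `condPendProb`. -/
noncomputable def condLatency {n : ℕ} (F : Fin n → Protocol) (h : Hist n) (i : Fin n) : ℝ≥0∞ :=
  ∑' s : ℕ,
    if s ≤ h.length then (if pending (h.take s) i then 1 else 0)
    else ENNReal.ofReal (condPendProb F h i (s - h.length))

/-- Conditional expected number of further slots until player `i` succeeds, given joint
history `h` (the slot of the successful transmission itself is counted). -/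
noncomputable def condRemaining {n : ℕ} (F : Fin n → Protocol) (h : Hist n) (i : Fin n) : ℝ≥0∞ :=
  ∑' s : ℕ, ENNReal.ofReal (condPendProb F h i s)

/-- A profile of protocols is in equilibrium if after no joint history (arising with
positive probability) can a player strictly decrease her conditional expected latency
by unilaterally switching to another (valid) protocol. -/
def IsEquilibrium {n : ℕ} (F : Fin n → Protocol) : Prop :=
  ∀ i : Fin n, ∀ h : Hist n, 0 < histProb F h →
    ∀ g : Protocol, ValidProtocol g →
      condLatency F h i ≤ condLatency (Function.update F i g) h i

end Contention

namespace Contention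

/-- An age-based protocol: the transmission probability in slot `t` (that is, after a
personal history of length `t − 1`) is `p t`, depending only on the time `t ≥ 1`. -/
def ageProtocol (p : ℕ → ℝ) : Protocol := fun h => p (h.length + 1)

end Contention

/-!
Fix a player `i`. If `p (T + 1) = 0` for some `T`, take the history of `T` idle slots; otherwise
`p` is positive, and take the history in which every other player succeeds in turn. Both histories
have positive probability, leave `i` pending and make every other pending player silent in the
next slot. There `i` profits from deviating to transmitting with probability one: she then succeeds at
once, whereas under `p < 1` all players stay quiet with positive probability.
-/

theorem List.Nodup.getElem_notMem_take {α : Type*} {l : List α} (hl : l.Nodup) {t : ℕ}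
    (ht : t < l.length) : l[t] ∉ l.take t := by
  rw [List.mem_take_iff_getElem]
  rintro ⟨s, hs, hst⟩
  have := hl.getElem_inj_iff.1 hst
  omega

namespace Contention

variable {n : ℕ}

section General

variable {F : Fin n → Protocol} {h : Hist n} {i : Fin n}

lemma not_alone_of_eq_false {v : Fin n → Bool} (hv : v i = false) : ¬ alone v i :=
  fun ha => by simp [ha.1] at hv

lemma pending_take (hp : pending h i) (s : ℕ) : pending (h.take s) i :=
  fun v hv => hp v (List.mem_of_mem_take hv)

lemma stepProb_nonneg (hF : ∀ j, ValidProtocol (F j)) (h : Hist n) (v : Fin n → Bool) :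
    0 ≤ stepProb F h v := by
  refine Finset.prod_nonneg fun j _ => ?_
  have := hF j (personal h j)
  split_ifs <;> linarith

lemma contProb_nonneg (hF : ∀ j, ValidProtocol (F j)) (h e : Hist n) : 0 ≤ contProb F h e :=
  Finset.prod_nonneg fun _ _ => stepProb_nonneg hF _ _

lemma stepProb_pos {v : Fin n → Bool}
    (htransmit : ∀ j, v j = true → pending h j ∧ 0 < F j (personal h j))
    (hquiet : ∀ j, pending h j → v j = false → F j (personal h j) < 1) :
    0 < stepProb F h v := by
  refine Finset.prod_pos fun j _ => ?_
  cases hv : v j with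
  | true =>
    obtain ⟨hp, hpos⟩ := htransmit j hv
    simpa [hp] using hpos
  | false =>
    by_cases hp : pending h j
    · simpa [hp] using hquiet j hp hv
    · simp [hp]

lemma histProb_pos (hstep : ∀ t (ht : t < h.length), 0 < stepProb F (h.take t) h[t]) :
    0 < histProb F h := by
  unfold histProb contProb
  refine Finset.prod_pos fun t ht => ?_
  have ht : t < h.length := Finset.mem_range.1 ht
  rw [List.nil_append, List.getD_eq_getElem _ _ ht]
  exact hstep t ht

lemma contProb_cons (F : Fin n → Protocol) (h : Hist n) (v : Fin n → Bool) (e : Hist n) :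
    contProb F h (v :: e) = stepProb F h v * contProb F (h ++ [v]) e := by
  simp [contProb, Finset.prod_range_succ', mul_comm]

lemma condPendProb_zero (hp : pending h i) : condPendProb F h i 0 = 1 := by
  simp [condPendProb, hp, contProb]

lemma stepProb_le_condPendProb_one (hF : ∀ j, ValidProtocol (F j)) (hp : pending h i)
    {v : Fin n → Bool} (hv : ¬ alone v i) : stepProb F h v ≤ condPendProb F h i 1 := by
  have hpv : pending (h ++ [v]) i := by
    simpa [pending, or_imp, forall_and] using ⟨hp, hv⟩
  refine le_of_eq_of_le ?_ (Finset.single_le_sum (fun e _ => ?_) (Finset.mem_univ fun _ => v))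
  · simp [hpv, contProb]
  · split_ifs
    · exact contProb_nonneg hF _ _
    · exact le_rfl

lemma condLatency_eq_length_add_condRemaining (hp : pending h i) :
    condLatency F h i = h.length + condRemaining F h i := by
  set f : ℕ → ℝ≥0∞ := fun s => if s ≤ h.length then (if pending (h.take s) i then 1 else 0)
    else ENNReal.ofReal (condPendProb F h i (s - h.length))
  have hpast : ∑ s ∈ Finset.range h.length, f s = h.length := by
    rw [Finset.sum_congr rfl (g := fun _ => 1) fun s hs => by
      simp [f, (Finset.mem_range.1 hs).le, pending_take hp s]]
    simp
  have hfuture : ∀ s, f (s + h.length) = ENNReal.ofReal (condPendProb F h i s) := by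
    rintro (_ | s)
    · simp [f, hp, condPendProb_zero hp]
    · simp [f]
  calc condLatency F h i = ∑ s ∈ Finset.range h.length, f s + ∑' s, f (s + h.length) :=
        ENNReal.summable.hasSum.sum_range_add.tsum_eq
    _ = h.length + condRemaining F h i := by simp only [hpast, hfuture, condRemaining]

lemma one_lt_condRemaining (hF : ∀ j, ValidProtocol (F j)) (hp : pending h i)
    (hquiet : 0 < stepProb F h fun _ => false) : 1 < condRemaining F h i := by
  have hstay : 0 < condPendProb F h i 1 :=
    hquiet.trans_le (stepProb_le_condPendProb_one hF hp (not_alone_of_eq_false rfl))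
  calc (1 : ℝ≥0∞) < 1 + ENNReal.ofReal (condPendProb F h i 1) :=
        ENNReal.lt_add_right ENNReal.one_ne_top (ENNReal.ofReal_pos.2 hstay).ne'
    _ = ∑ s ∈ Finset.range 2, ENNReal.ofReal (condPendProb F h i s) := by
        simp [Finset.sum_range_succ, condPendProb_zero hp]
    _ ≤ condRemaining F h i := ENNReal.sum_le_tsum _

def alwaysTransmit : Protocol := fun _ => 1

lemma validProtocol_alwaysTransmit : ValidProtocol alwaysTransmit :=
  fun _ => ⟨zero_le_one, le_rfl⟩

section Deviation

variable (hp : pending h i) (hsilent : ∀ j, j ≠ i → pending h j → F j (personal h j) = 0)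
include hp hsilent

lemma stepProb_update_alwaysTransmit_eq_zero {v : Fin n → Bool} (hv : ¬ alone v i) :
    stepProb (Function.update F i alwaysTransmit) h v = 0 := by
  by_cases hvi : v i = true
  · obtain ⟨j, hji, hvj⟩ : ∃ j, j ≠ i ∧ v j = true := by
      by_contra! hc
      exact hv ⟨hvi, fun j hj => by simpa using hc j hj⟩
    refine Finset.prod_eq_zero (Finset.mem_univ j) ?_
    by_cases hpj : pending h j
    · simp [hpj, hvj, Function.update_of_ne hji, hsilent j hji hpj]
    · simp [hpj, hvj]
  · refine Finset.prod_eq_zero (Finset.mem_univ i) ?_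
    simp [hp, hvi, alwaysTransmit]

lemma condPendProb_update_alwaysTransmit_succ (m : ℕ) :
    condPendProb (Function.update F i alwaysTransmit) h i (m + 1) = 0 := by
  refine Finset.sum_eq_zero fun e _ => ?_
  rw [List.ofFn_succ]
  split_ifs with hpe
  · have hfirst : ¬ alone (e 0) i := hpe (e 0) (by simp)
    rw [contProb_cons, stepProb_update_alwaysTransmit_eq_zero hp hsilent hfirst, zero_mul]
  · rfl

lemma condRemaining_update_alwaysTransmit :
    condRemaining (Function.update F i alwaysTransmit) h i = 1 := by
  rw [condRemaining, tsum_eq_single 0 fun s hs => ?_, condPendProb_zero hp, ENNReal.ofReal_one]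
  obtain ⟨m, rfl⟩ := Nat.exists_eq_succ_of_ne_zero hs
  rw [condPendProb_update_alwaysTransmit_succ hp hsilent, ENNReal.ofReal_zero]

end Deviation

theorem not_isEquilibrium_of_others_silent (hF : ∀ j, ValidProtocol (F j))
    (hh : 0 < histProb F h) (hp : pending h i) (hi : F i (personal h i) < 1)
    (hsilent : ∀ j, j ≠ i → pending h j → F j (personal h j) = 0) : ¬ IsEquilibrium F := by
  intro hequil
  have hquiet : 0 < stepProb F h fun _ => false := by
    refine stepProb_pos (by simp) fun j hj _ => ?_
    by_cases hji : j = i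
    · exact hji ▸ hi
    · simp [hsilent j hji hj]
  have hdev := hequil i h hh alwaysTransmit validProtocol_alwaysTransmit
  rw [condLatency_eq_length_add_condRemaining hp, condLatency_eq_length_add_condRemaining hp,
    condRemaining_update_alwaysTransmit hp hsilent] at hdev
  exact hdev.not_gt (ENNReal.add_lt_add_left (by simp) (one_lt_condRemaining hF hp hquiet))

end General

section AgeProtocol

variable {p : ℕ → ℝ}

lemma ageProtocol_personal (p : ℕ → ℝ) (h : Hist n) (j : Fin n) :
    ageProtocol p (personal h j) = p (h.length + 1) := by
  simp [ageProtocol, personal]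

lemma validProtocol_ageProtocol (hp : ∀ t, 1 ≤ t → 0 ≤ p t ∧ p t < 1) :
    ValidProtocol (ageProtocol p) :=
  fun h => ⟨(hp _ h.length.succ_pos).1, (hp _ h.length.succ_pos).2.le⟩

lemma stepProb_ageProtocol_pos (hp : ∀ t, 1 ≤ t → p t < 1) {h : Hist n} {v : Fin n → Bool}
    (htransmit : ∀ j, v j = true → pending h j ∧ 0 < p (h.length + 1)) :
    0 < stepProb (fun _ => ageProtocol p) h v :=
  stepProb_pos (by simpa only [ageProtocol_personal] using htransmit)
    fun _ _ _ => by simpa only [ageProtocol_personal] using hp _ (Nat.succ_pos _)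

lemma pending_replicate_quiet (T : ℕ) (j : Fin n) :
    pending (List.replicate T fun _ => false) j := by
  intro v hv
  rw [List.eq_of_mem_replicate hv]
  exact not_alone_of_eq_false rfl

lemma histProb_ageProtocol_replicate_quiet_pos (hp : ∀ t, 1 ≤ t → p t < 1) (T : ℕ) :
    0 < histProb (fun _ : Fin n => ageProtocol p) (List.replicate T fun _ => false) :=
  histProb_pos fun _ _ => stepProb_ageProtocol_pos hp (by simp)

def soloVec (k : Fin n) : Fin n → Bool := fun j => decide (j = k)

lemma alone_soloVec_iff {k j : Fin n} : alone (soloVec k) j ↔ j = k := by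
  refine ⟨fun ha => by simpa [soloVec] using ha.1, fun hjk => ⟨by simp [soloVec, hjk], ?_⟩⟩
  intro j' hj'
  simpa [soloVec, hjk] using hj'

def soloHist (l : List (Fin n)) : Hist n := l.map soloVec

lemma pending_soloHist_iff {l : List (Fin n)} {j : Fin n} : pending (soloHist l) j ↔ j ∉ l := by
  simp only [pending, soloHist, List.forall_mem_map, alone_soloVec_iff]
  exact ⟨fun H hj => H j hj rfl, fun H k hk hjk => H (hjk ▸ hk)⟩

lemma histProb_ageProtocol_soloHist_pos (hp : ∀ t, 1 ≤ t → 0 < p t ∧ p t < 1)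
    {l : List (Fin n)} (hl : l.Nodup) :
    0 < histProb (fun _ : Fin n => ageProtocol p) (soloHist l) := by
  refine histProb_pos fun t ht => stepProb_ageProtocol_pos (fun t ht => (hp t ht).2) ?_
  have ht' : t < l.length := by simpa [soloHist] using ht
  intro j hj
  have hjt : j = l[t] := by
    rw [show (soloHist l)[t] = soloVec l[t] from List.getElem_map _] at hj
    simpa [soloVec] using hj
  refine ⟨?_, (hp _ (Nat.succ_pos _)).1⟩
  rw [soloHist, ← List.map_take, ← soloHist, pending_soloHist_iff, hjt]
  exact hl.getElem_notMem_take ht'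

end AgeProtocol

/-- A non-blocking anonymous age-based acknowledgment-based protocol
(`p t < 1` for every slot `t`) for `n ≥ 1` players with finite expected latency is not
in equilibrium. -/
theorem nonblocking_age_based_not_equilibrium :
    ∀ (n : ℕ) (p : ℕ → ℝ), 1 ≤ n →
      (∀ t : ℕ, 1 ≤ t → 0 ≤ p t ∧ p t < 1) →
      (∀ i : Fin n, condLatency (fun _ : Fin n => ageProtocol p) [] i < ⊤) →
      ¬ IsEquilibrium (fun _ : Fin n => ageProtocol p) := by
  intro n p hn hp _
  let i : Fin n := ⟨0, hn⟩
  have hF : ∀ _ : Fin n, ValidProtocol (ageProtocol p) := fun _ => validProtocol_ageProtocol hp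
  have hlt : ∀ t, 1 ≤ t → p t < 1 := fun t ht => (hp t ht).2
  by_cases hzero : ∃ T, p (T + 1) = 0
  · obtain ⟨T, hT⟩ := hzero
    refine not_isEquilibrium_of_others_silent hF (histProb_ageProtocol_replicate_quiet_pos hlt T)
      (pending_replicate_quiet T i) (by simp [ageProtocol_personal, hlt]) fun j _ _ => ?_
    simp [ageProtocol_personal, hT]
  · simp only [not_exists] at hzero
    have hpos : ∀ t, 1 ≤ t → 0 < p t ∧ p t < 1 := fun t ht =>
      ⟨(hp t ht).1.lt_of_ne (Ne.symm (Nat.sub_add_cancel ht ▸ hzero (t - 1))), hlt t ht⟩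
    let others := (List.finRange n).filter (· ≠ i)
    refine not_isEquilibrium_of_others_silent (h := soloHist others) (i := i) hF
      (histProb_ageProtocol_soloHist_pos hpos ((List.nodup_finRange n).filter _))
      (pending_soloHist_iff.2 (by simp [others])) (by simp [ageProtocol_personal, hlt])
      fun j hji hj => ?_
    simp [pending_soloHist_iff, others, hji] at hj

end Contention
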